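/- Fix m = 1 and integers q, s ≥ 0, and set k := q + 2s. Let t, t_1, …, t_q ∈ {0,1} × {0,1}, let λ_1, …, λ_k ∈ Fˣ, and let u := diag(λ_1, …, λ_k) ⊗ X_t (a 2k×2k matrix). Suppose μ ∈ Fˣ satisfies λ_i² · β(t, t_i) = μ for i = 1, …, q and λ_{q+2j−1} · λ_{q+2j} = μ for j = 1, …, s. Then det(u) = μ^{k} · β(t, t_1 + ⋯ + t_q + k·c), where c := (1,1) and the sum t_1 + ⋯ + t_q + k·c is taken componentwise modulo 2. -/

import Mathlib

open Matrix

/-- The 2×2 matrix `diag(-1, 1)`. -/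
def Amat (F : Type*) [Field F] : Matrix (Fin 2) (Fin 2) F := !![-1, 0; 0, 1]

/-- The 2×2 matrix interchanging the basis vectors. -/
def Bmat (F : Type*) [Field F] : Matrix (Fin 2) (Fin 2) F := !![0, 1; 1, 0]

/-- The generator `X_t` of the standard realization of the graded division algebra,
for `t = (x, y)`: the iterated Kronecker product of the matrices `A^{x_j} * B₀^{y_j}`. -/
def Xmat (F : Type*) [Field F] (m : ℕ) (x y : Fin m → ZMod 2) :
    Matrix (Fin m → Fin 2) (Fin m → Fin 2) F :=
  Matrix.of fun i k => ∏ j, (Amat F ^ (x j).val * Bmat F ^ (y j).val) (i j) (k j)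

/-- The bicharacter value `β(t, t') = (-1)^{Σ_j (x_j y'_j + y_j x'_j)}`. -/
def betaSign (F : Type*) [Field F] {m : ℕ}
    (t t' : (Fin m → ZMod 2) × (Fin m → ZMod 2)) : F :=
  (-1 : F) ^ (∑ j, (t.1 j * t'.2 j + t.2 j * t'.1 j) : ZMod 2).val

/-!
With `D = diag(λ_1, …, λ_k)` we have `det (D ⊗ X_t) = (det D)² · (det X_t)^k`, and for `m = 1`,
`det X_t = (-1)^(x + y)` while `β(t, k·c) = (-1)^(k(x + y))`. Since `β(t, -)` is a character,
`β(t, t_1 + ⋯ + t_q + k·c) = ∏ β(t, t_i) · (det X_t)^k`, so it remains to see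
`(det D)² = μ^k ∏ β(t, t_i)`: as `β(t, t_i)² = 1`, each `λ_i²` with `i ≤ q` equals `μ β(t, t_i)`,
and the remaining `2s` entries pair up into products equal to `μ`.
-/

open Finset

section NegOnePow

variable {R : Type*} [CommRing R]

lemma neg_one_pow_natCast_val (n : ℕ) : (-1 : R) ^ (n : ZMod 2).val = (-1) ^ n := by
  rw [ZMod.val_natCast, ← neg_one_pow_eq_pow_mod_two]

lemma neg_one_pow_val_add (u v : ZMod 2) :
    (-1 : R) ^ (u + v).val = (-1) ^ u.val * (-1) ^ v.val := by
  rw [← pow_add, ← neg_one_pow_natCast_val (u.val + v.val)]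
  push_cast
  simp only [ZMod.natCast_zmod_val]

lemma neg_one_pow_natCast_mul_val (n : ℕ) (u : ZMod 2) :
    (-1 : R) ^ ((n : ZMod 2) * u).val = ((-1) ^ u.val) ^ n := by
  rw [← pow_mul, ← neg_one_pow_natCast_val (u.val * n)]
  push_cast
  rw [ZMod.natCast_zmod_val, mul_comm]

lemma sq_neg_one_pow (n : ℕ) : ((-1 : R) ^ n) ^ 2 = 1 := by
  rw [pow_right_comm, neg_one_sq, one_pow]

end NegOnePow

lemma Fin.prod_univ_two_mul {M : Type*} [CommMonoid M] (s : ℕ) (f : Fin (2 * s) → M) :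
    ∏ i, f i = ∏ j : Fin s, f ⟨2 * j, by omega⟩ * f ⟨2 * j + 1, by omega⟩ := by
  rw [← Fintype.prod_equiv (finProdFinEquiv.trans (finCongr (mul_comm s 2))) _ _ fun _ => rfl,
    Fintype.prod_prod_type]
  refine prod_congr rfl fun j _ => ?_
  rw [Fin.prod_univ_two]
  congr 2 <;> ext <;> simp [finProdFinEquiv, add_comm]

section BetaSign

variable {F : Type*} [Field F] {m : ℕ}

lemma betaSign_zero_right (t : (Fin m → ZMod 2) × (Fin m → ZMod 2)) : betaSign F t 0 = 1 := by
  simp [betaSign]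

lemma betaSign_add_right (t t' t'' : (Fin m → ZMod 2) × (Fin m → ZMod 2)) :
    betaSign F t (t' + t'') = betaSign F t t' * betaSign F t t'' := by
  rw [betaSign, betaSign, betaSign, ← neg_one_pow_val_add, ← sum_add_distrib]
  congr 2
  refine sum_congr rfl fun j _ => ?_
  simp only [Prod.fst_add, Prod.snd_add, Pi.add_apply]
  ring

lemma betaSign_sum_right {ι : Type*} (t : (Fin m → ZMod 2) × (Fin m → ZMod 2)) (S : Finset ι)
    (f : ι → (Fin m → ZMod 2) × (Fin m → ZMod 2)) :
    betaSign F t (∑ i ∈ S, f i) = ∏ i ∈ S, betaSign F t (f i) := by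
  induction S using Finset.cons_induction with
  | empty => exact betaSign_zero_right t
  | cons i S hi ih => rw [sum_cons, prod_cons, betaSign_add_right, ih]

lemma sq_betaSign (t t' : (Fin m → ZMod 2) × (Fin m → ZMod 2)) : betaSign F t t' ^ 2 = 1 :=
  sq_neg_one_pow _

lemma betaSign_natCast_right (t : (Fin m → ZMod 2) × (Fin m → ZMod 2)) (n : ℕ) :
    betaSign F t (fun _ => (n : ZMod 2), fun _ => (n : ZMod 2)) =
      ((-1) ^ (∑ j, (t.1 j + t.2 j)).val) ^ n := by
  rw [betaSign, ← neg_one_pow_natCast_mul_val, mul_sum]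
  congr 2
  refine sum_congr rfl fun j _ => ?_
  ring

end BetaSign

lemma det_Xmat_one {F : Type*} [Field F] (x y : Fin 1 → ZMod 2) :
    (Xmat F 1 x y).det = (-1) ^ (x 0 + y 0).val := by
  have hX : Xmat F 1 x y =
      reindex (Equiv.funUnique (Fin 1) (Fin 2)).symm (Equiv.funUnique (Fin 1) (Fin 2)).symm
        (Amat F ^ (x 0).val * Bmat F ^ (y 0).val) := by
    ext i k
    simp [Xmat]
  rw [hX, det_reindex_self, det_mul, det_pow, det_pow,
    show (Amat F).det = -1 by simp [Amat, det_fin_two_of],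
    show (Bmat F).det = -1 by simp [Bmat, det_fin_two_of], neg_one_pow_val_add]

lemma prod_sq_eq_pow_mul_prod_betaSign {F : Type*} [Field F] {m : ℕ} (q s : ℕ)
    (t : (Fin m → ZMod 2) × (Fin m → ZMod 2))
    (ts : Fin q → (Fin m → ZMod 2) × (Fin m → ZMod 2)) (lam : Fin (q + 2 * s) → F) (μ : F)
    (hμq : ∀ i : Fin q, lam (Fin.castAdd (2 * s) i) ^ 2 * betaSign F t (ts i) = μ)
    (hμs : ∀ j : Fin s,
      lam ⟨q + 2 * (j : ℕ), by omega⟩ * lam ⟨q + 2 * (j : ℕ) + 1, by omega⟩ = μ) :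
    (∏ i, lam i) ^ 2 = μ ^ (q + 2 * s) * ∏ i, betaSign F t (ts i) := by
  have hsq (i : Fin q) : lam (Fin.castAdd (2 * s) i) ^ 2 = μ * betaSign F t (ts i) := by
    rw [← hμq, mul_assoc, ← sq, sq_betaSign, mul_one]
  have hpairs : ∏ i : Fin (2 * s), lam (Fin.natAdd q i) = μ ^ s := by
    rw [Fin.prod_univ_two_mul]
    exact (Fintype.prod_congr _ _ hμs).trans (Fin.prod_const s μ)
  rw [Fin.prod_univ_add, mul_pow, hpairs, ← prod_pow, prod_congr rfl fun i _ => hsq i,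
    prod_mul_distrib, prod_const, card_univ, Fintype.card_fin]
  ring

/-- For `m = 1`, the determinant of `u = diag(λ_1, …, λ_k) ⊗ X_t` equals
`μ^k · β(t, t_1 + ⋯ + t_q + k·c)` where `c = (1,1)`. -/
theorem stmt14 {F : Type*} [Field F] (q s : ℕ)
    (t : (Fin 1 → ZMod 2) × (Fin 1 → ZMod 2))
    (ts : Fin q → (Fin 1 → ZMod 2) × (Fin 1 → ZMod 2))
    (lam : Fin (q + 2 * s) → Fˣ) (μ : Fˣ)
    (hμq : ∀ i : Fin q, ((lam (Fin.castAdd (2 * s) i) : F)) ^ 2 * betaSign F t (ts i) = (μ : F))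
    (hμs : ∀ j : Fin s,
      ((lam ⟨q + 2 * (j : ℕ), by have := j.isLt; omega⟩ : F))
        * ((lam ⟨q + 2 * (j : ℕ) + 1, by have := j.isLt; omega⟩ : F)) = (μ : F)) :
    (Matrix.kroneckerMap (· * ·) (Matrix.diagonal fun i => ((lam i : F)))
        (Xmat F 1 t.1 t.2)).det
      = (μ : F) ^ (q + 2 * s)
        * betaSign F t
            ((∑ i, (ts i).1) + fun _ => ((q + 2 * s : ℕ) : ZMod 2),
             (∑ i, (ts i).2) + fun _ => ((q + 2 * s : ℕ) : ZMod 2)) := by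
  have hsum : ((∑ i, (ts i).1) + fun _ => ((q + 2 * s : ℕ) : ZMod 2),
      (∑ i, (ts i).2) + fun _ => ((q + 2 * s : ℕ) : ZMod 2)) =
      ∑ i, ts i + (fun _ => ((q + 2 * s : ℕ) : ZMod 2), fun _ => ((q + 2 * s : ℕ) : ZMod 2)) := by
    ext <;> simp [Prod.fst_sum, Prod.snd_sum]
  rw [det_kronecker, det_diagonal, det_Xmat_one, Fintype.card_fin, Fintype.card_fun,
    Fintype.card_fin, Fintype.card_fin, pow_one,
    prod_sq_eq_pow_mul_prod_betaSign q s t ts (fun i => (lam i : F)) μ hμq hμs, hsum,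
    betaSign_add_right, betaSign_sum_right, betaSign_natCast_right, Fin.sum_univ_one, mul_assoc]
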